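/- Let n ≥ 2 and let h̃ : [0,∞) → ℝ be smooth with h̃'(r) > 0 and h̃'(r) + r h̃''(r) > 0 for all r ≥ 0, and let φ̃ : [0,∞) → ℝ be smooth and positive. Then for each j ∈ {1,…,n} the function z ↦ φ̃'(|z|²) z_j / (h̃'(|z|²) + |z|² h̃''(|z|²)) is holomorphic on ℂⁿ if and only if there exist real constants A and B with φ̃(r) = A + B r h̃'(r) for all r ≥ 0. (The displayed function is the j-th component of the gradient field (∂̄φ)^♯ of φ(z) = φ̃(|z|²) with respect to the U(n)-invariant Kähler metric with potential h̃(|z|²); its holomorphicity characterizes when the conformal metric g = φ^{-1} h has holomorphic torsion.) -/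

import Mathlib

open Complex MeasureTheory Finset

noncomputable section

/-!
With `g = φ̃' / (h̃' + r h̃'')`, the `j`-th component is `z ↦ g(|z|²) zⱼ`. On the line `ℂ eⱼ`,
dividing by `zⱼ = w` leaves the real-valued function `w ↦ g(|w|²)`, holomorphic on `ℂ \ {0}` and
hence constant by the open mapping theorem; conversely, if `g ≡ B` on `(0, ∞)` the component is the
linear function `B zⱼ`. Finally, `g ≡ B` says `φ̃' = B (r h̃')'`, i.e. `φ̃ = A + B r h̃'` on
`(0, ∞)`, and then on `[0, ∞)` by continuity.
-/

/-- `|z|² = Σ |zₖ|²` for `z ∈ ℂⁿ`. -/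
def normSq' {n : ℕ} (z : Fin n → ℂ) : ℝ := ∑ i, Complex.normSq (z i)

section RadialComponent

variable {n : ℕ}

lemma normSq_apply_le_normSq' (z : Fin n → ℂ) (j : Fin n) :
    Complex.normSq (z j) ≤ normSq' z :=
  Finset.single_le_sum (fun i _ => Complex.normSq_nonneg (z i)) (Finset.mem_univ j)

lemma normSq'_single (j : Fin n) (w : ℂ) : normSq' (Pi.single j w) = Complex.normSq w := by
  rw [normSq', Finset.sum_eq_single j (fun i _ hij => by simp [hij]) (by simp)]
  simp

lemma exists_const_of_differentiable_radial_mul_apply {g : ℝ → ℝ} {j : Fin n}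
    (hg : Differentiable ℂ fun z : Fin n → ℂ => (g (normSq' z) : ℂ) * z j) :
    ∃ B, ∀ r > 0, g r = B := by
  set F : ℂ → ℂ := fun w => (g (Complex.normSq w) : ℂ)
  have hF : Set.EqOn F
      (fun w => (g (normSq' (Pi.single j w)) : ℂ) * (Pi.single j w : Fin n → ℂ) j / w) {0}ᶜ := by
    intro w hw
    simp [F, normSq'_single, mul_div_assoc, div_self (Set.mem_compl_singleton_iff.mp hw)]
  have hFd : DifferentiableOn ℂ F {0}ᶜ := by
    refine DifferentiableOn.congr ?_ hF
    exact ((hg.comp (ContinuousLinearMap.single ℂ (fun _ : Fin n => ℂ) j).differentiable)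
      |>.differentiableOn).div differentiableOn_id fun w hw => hw
  obtain ⟨c, hc⟩ := (hFd.analyticOnNhd isOpen_compl_singleton).eq_const_of_im_eq_const
    (c₀ := 0) (fun w _ => Complex.ofReal_im _) isOpen_compl_singleton
    (isConnected_compl_singleton_of_one_lt_rank (by simp) 0)
  refine ⟨c.re, fun r hr => ?_⟩
  have hw : ((Real.sqrt r : ℝ) : ℂ) ∈ ({0}ᶜ : Set ℂ) := by simpa using (Real.sqrt_pos.mpr hr).ne'
  simpa [F, Complex.normSq_ofReal, Real.mul_self_sqrt hr.le] using congrArg Complex.re (hc _ hw)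

lemma differentiable_radial_mul_apply_iff (g : ℝ → ℝ) (j : Fin n) :
    (Differentiable ℂ fun z : Fin n → ℂ => (g (normSq' z) : ℂ) * z j) ↔
      ∃ B, ∀ r > 0, g r = B := by
  refine ⟨exists_const_of_differentiable_radial_mul_apply, fun ⟨B, hB⟩ => ?_⟩
  have hlin : (fun z : Fin n → ℂ => (g (normSq' z) : ℂ) * z j) = fun z => (B : ℂ) * z j := by
    funext z
    by_cases hz : 0 < normSq' z
    · rw [hB _ hz]
    · have : z j = 0 := Complex.normSq_eq_zero.mp
        (le_antisymm ((normSq_apply_le_normSq' z j).trans (not_lt.mp hz)) (Complex.normSq_nonneg _))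
      simp [this]
  rw [hlin]
  exact (differentiable_const _).mul
    (ContinuousLinearMap.proj j : (Fin n → ℂ) →L[ℂ] ℂ).differentiable

end RadialComponent

lemma exists_eq_add_const_mul_on_Ici_iff {f u : ℝ → ℝ} (hf : Differentiable ℝ f)
    (hu : Differentiable ℝ u) :
    (∃ A B : ℝ, ∀ r : ℝ, 0 ≤ r → f r = A + B * u r) ↔
      ∃ B, ∀ r > 0, deriv f r = B * deriv u r := by
  constructor
  · rintro ⟨A, B, hAB⟩
    refine ⟨B, fun r hr => ?_⟩
    have hfu : f =ᶠ[nhds r] fun x => A + B * u x :=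
      Filter.eventually_of_mem (Ici_mem_nhds hr) fun x hx => hAB x hx
    rw [hfu.deriv_eq, deriv_const_add, deriv_const_mul _ (hu r)]
  · rintro ⟨B, hB⟩
    obtain ⟨A, hA⟩ := isOpen_Ioi.exists_eq_add_of_deriv_eq isPreconnected_Ioi
      hf.differentiableOn (hu.const_mul B).differentiableOn
      fun r hr => by rw [hB r hr, deriv_const_mul _ (hu r)]
    have hA' := hA.of_subset_closure hf.continuous.continuousOn
      ((continuous_const.mul hu.continuous).add continuous_const).continuousOn
      Set.Ioi_subset_Ici_self (closure_Ioi (0 : ℝ)).ge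
    exact ⟨A, B, fun r hr => by rw [hA' hr]; ring⟩

theorem stmt18 (n : ℕ) (hn : 2 ≤ n) (ht : ℝ → ℝ)
    (hht : ContDiff ℝ (⊤ : ℕ∞) ht)
    (h2 : ∀ r : ℝ, 0 ≤ r → 0 < deriv ht r + r * deriv (deriv ht) r)
    (φt : ℝ → ℝ) (hφt : ContDiff ℝ (⊤ : ℕ∞) φt) :
    (∀ j : Fin n,
      Differentiable ℂ
        (fun z : Fin n → ℂ =>
          ((deriv φt (normSq' z) : ℝ) : ℂ) * z j /
            ((deriv ht (normSq' z) +
              normSq' z * deriv (deriv ht) (normSq' z) : ℝ) : ℂ))) ↔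
      ∃ A B : ℝ, ∀ r : ℝ, 0 ≤ r → φt r = A + B * (r * deriv ht r) := by
  have hht' : Differentiable ℝ (deriv ht) :=
    (contDiff_infty_iff_deriv.mp (contDiff_infty_iff_deriv.mp hht).2).1
  have hu : Differentiable ℝ fun r => r * deriv ht r := differentiable_id.mul hht'
  have hu' : ∀ r, deriv (fun r => r * deriv ht r) r = deriv ht r + r * deriv (deriv ht) r :=
    fun r => by rw [((hasDerivAt_id' r).fun_mul (hht' r).hasDerivAt).deriv, one_mul]
  set g : ℝ → ℝ := fun r => deriv φt r / (deriv ht r + r * deriv (deriv ht) r) with hg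
  have hcomp (j : Fin n) : (fun z : Fin n → ℂ =>
      ((deriv φt (normSq' z) : ℝ) : ℂ) * z j /
        ((deriv ht (normSq' z) + normSq' z * deriv (deriv ht) (normSq' z) : ℝ) : ℂ)) =
      fun z => (g (normSq' z) : ℂ) * z j := by
    funext z
    push_cast [hg]
    ring
  have : Nonempty (Fin n) := ⟨⟨0, by omega⟩⟩
  simp_rw [hcomp, differentiable_radial_mul_apply_iff g, forall_const,
    exists_eq_add_const_mul_on_Ici_iff (hφt.differentiable (by simp)) hu, hu', hg]
  exact exists_congr fun B => forall₂_congr fun r hr => div_eq_iff (h2 r hr.le).ne'
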